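/- In the Section 7 setting with n even, let γ_i denote the signed weight of the oriented base edge e_i, let B' be the signed GKM structure on the underlying graph of B in which e_{2i+1} carries weight γ_{2i+1} and e_{2i} carries weight −γ_{2i}, and let Γ' be the signed structure obtained from Γ by changing the signs of the labels of f_{2i} and h_{2i} for i = 1,…,n/2. Then Γ' → B' is a signed GKM fibration, and if Γ → B corresponds to (k_1,…,k_n) under the classification of signed fibrations, then Γ' → B' corresponds to (−k_1, k_2, …, −k_{n−1}, k_n). In particular, since Γ has the maximal number n−1 of interior vertices, Γ' has exactly one interior vertex. -/

import Mathlib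

open Classical

namespace GKMPaper

/-- `ℤ^m`, the weight lattice. -/
abbrev Zm (m : ℕ) := Fin m → ℤ

/-- The relation identifying a vector with its negative. -/
def pmRel (m : ℕ) (a b : Zm m) : Prop := a = b ∨ a = -b

theorem pmRel_equiv (m : ℕ) : Equivalence (pmRel m) := by
  constructor
  · intro a; exact Or.inl rfl
  · intro a b hab
    rcases hab with hh | hh
    · exact Or.inl hh.symm
    · exact Or.inr (by rw [hh, neg_neg])
  · intro a b c h1 h2
    rcases h1 with h1 | h1 <;> rcases h2 with h2 | h2
    · exact Or.inl (h1.trans h2)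
    · exact Or.inr (h1.trans h2)
    · exact Or.inr (by rw [h1, h2])
    · exact Or.inl (by rw [h1, h2, neg_neg])

def pmSetoid (m : ℕ) : Setoid (Zm m) := ⟨pmRel m, pmRel_equiv m⟩

/-- `ℤ^m / ±1`. -/
def ZmPM (m : ℕ) := Quotient (pmSetoid m)

/-- The projection `ℤ^m → ℤ^m/±1`. -/
def pm {m : ℕ} (a : Zm m) : ZmPM m := Quotient.mk (pmSetoid m) a

/-- Linear independence over `ℤ`. -/
def Indep {m : ℕ} (a b : Zm m) : Prop :=
  ∀ c d : ℤ, c • a + d • b = 0 → c = 0 ∧ d = 0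

/-- An abstract graph with finite vertex and edge sets, each edge occurring with
both orientations, and no loops. -/
structure OrGraph : Type 1 where
  V : Type
  E : Type
  fV : Fintype V
  fE : Fintype E
  dV : DecidableEq V
  dE : DecidableEq E
  src : E → V
  dst : E → V
  rev : E → E
  rev_rev : ∀ e, rev (rev e) = e
  rev_ne : ∀ e, rev e ≠ e
  src_rev : ∀ e, src (rev e) = dst e
  no_loop : ∀ e, src e ≠ dst e

attribute [instance] OrGraph.fV OrGraph.fE OrGraph.dV OrGraph.dE

/-- A connection on a graph. -/
structure Connection (G : OrGraph) where
  t : G.E → G.E → G.E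
  src_t : ∀ e f, G.src f = G.src e → G.src (t e f) = G.dst e
  t_self : ∀ e, t e e = G.rev e
  t_inv : ∀ e f, G.src f = G.src e → t (G.rev e) (t e f) = f

/-- `k`-valence. -/
def OrGraph.Regular (G : OrGraph) (k : ℕ) : Prop :=
  ∀ v : G.V, Fintype.card {e : G.E // G.src e = v} = k

def OrGraph.Adj (G : OrGraph) (v w : G.V) : Prop :=
  ∃ e, G.src e = v ∧ G.dst e = w

def OrGraph.IsConn (G : OrGraph) : Prop :=
  ∀ v w : G.V, Relation.ReflTransGen G.Adj v w

/-- Compatibility of a connection with an unsigned axial function. -/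
def UnsignedCompat {m : ℕ} (G : OrGraph) (α : G.E → ZmPM m) (C : Connection G) : Prop :=
  (∀ e f : G.E, G.src f = G.src e → e ≠ f →
      ∀ a b : Zm m, pm a = α e → pm b = α f → Indep a b) ∧
  (∀ e f : G.E, G.src f = G.src e →
      ∃ (a g : Zm m) (c : ℤ), pm a = α f ∧ pm g = α e ∧ α (C.t e f) = pm (a + c • g)) ∧
  (∀ e : G.E, α (G.rev e) = α e)

/-- `(G, α)` is an (unsigned) abstract GKM graph of valence `k` with labels in `ℤ^m/±1`. -/
def IsGKM {m : ℕ} (G : OrGraph) (k : ℕ) (α : G.E → ZmPM m) : Prop :=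
  G.Regular k ∧ G.IsConn ∧ ∃ C : Connection G, UnsignedCompat G α C

/-- Compatibility of a connection with a signed axial function. -/
def SignedCompat {m : ℕ} (G : OrGraph) (α : G.E → Zm m) (C : Connection G) : Prop :=
  (∀ e f : G.E, G.src f = G.src e → e ≠ f → Indep (α e) (α f)) ∧
  (∀ e f : G.E, G.src f = G.src e → ∃ c : ℤ, α (C.t e f) = α f + c • α e) ∧
  (∀ e : G.E, α (G.rev e) = - α e)

/-- `(G, α)` is a signed abstract GKM graph of valence `k` with labels in `ℤ^m`. -/
def IsSignedGKM {m : ℕ} (G : OrGraph) (k : ℕ) (α : G.E → Zm m) : Prop :=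
  G.Regular k ∧ G.IsConn ∧ ∃ C : Connection G, SignedCompat G α C

/-- Effectivity of an unsigned GKM graph: at every vertex, the labels of the
outgoing edges lift to a generating set of `ℤ^m`. -/
def Effective {m : ℕ} (G : OrGraph) (α : G.E → ZmPM m) : Prop :=
  ∀ v : G.V, ∃ lift : {e : G.E // G.src e = v} → Zm m,
    (∀ e, pm (lift e) = α e.1) ∧ Submodule.span ℤ (Set.range lift) = ⊤

def SignedEffective {m : ℕ} (G : OrGraph) (α : G.E → Zm m) : Prop :=
  ∀ v : G.V,
    Submodule.span ℤ (Set.range (fun e : {e : G.E // G.src e = v} => α e.1)) = ⊤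

/-- A graph fibration: a morphism sending vertices to vertices and horizontal
edges to edges, bijectively from the horizontal edges at `p` to the edges at `π(p)`. -/
structure GraphFib (G B : OrGraph) where
  onV : G.V → B.V
  onE : G.E → B.E
  src_onE : ∀ e, onV (G.src e) ≠ onV (G.dst e) → B.src (onE e) = onV (G.src e)
  dst_onE : ∀ e, onV (G.src e) ≠ onV (G.dst e) → B.dst (onE e) = onV (G.dst e)
  rev_onE : ∀ e, onV (G.src e) ≠ onV (G.dst e) → onE (G.rev e) = B.rev (onE e)

def GraphFib.Vertical {G B : OrGraph} (π : GraphFib G B) (e : G.E) : Prop :=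
  π.onV (G.src e) = π.onV (G.dst e)

def GraphFib.IsFib {G B : OrGraph} (π : GraphFib G B) : Prop :=
  ∀ p : G.V, Function.Bijective
    (fun e : {e : G.E // G.src e = p ∧ ¬ π.Vertical e} =>
      (⟨π.onE e.1, by rw [π.src_onE e.1 e.2.2, e.2.1]⟩ : {f : B.E // B.src f = π.onV p}))

/-- The extra conditions for a (unsigned) GKM fibration, w.r.t. connections `C`, `CB`. -/
def GKMFibCompat {m : ℕ} {G B : OrGraph} (αΓ : G.E → ZmPM m) (αB : B.E → ZmPM m)
    (π : GraphFib G B) (C : Connection G) (CB : Connection B) : Prop :=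
  (∀ e, ¬ π.Vertical e → αΓ e = αB (π.onE e)) ∧
  (∀ e f, G.src f = G.src e → π.Vertical f → π.Vertical (C.t e f)) ∧
  (∀ e f, G.src f = G.src e → ¬ π.Vertical e → ¬ π.Vertical f →
      ¬ π.Vertical (C.t e f) ∧ π.onE (C.t e f) = CB.t (π.onE e) (π.onE f))

/-- `π` is a GKM fibration of unsigned GKM graphs. -/
def IsGKMFib {m : ℕ} {G B : OrGraph} (αΓ : G.E → ZmPM m) (αB : B.E → ZmPM m)
    (π : GraphFib G B) : Prop :=
  π.IsFib ∧ ∃ (C : Connection G) (CB : Connection B),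
    UnsignedCompat G αΓ C ∧ UnsignedCompat B αB CB ∧ GKMFibCompat αΓ αB π C CB

def SignedGKMFibCompat {m : ℕ} {G B : OrGraph} (sΓ : G.E → Zm m) (sB : B.E → Zm m)
    (π : GraphFib G B) (C : Connection G) (CB : Connection B) : Prop :=
  (∀ e, ¬ π.Vertical e → sΓ e = sB (π.onE e)) ∧
  (∀ e f, G.src f = G.src e → π.Vertical f → π.Vertical (C.t e f)) ∧
  (∀ e f, G.src f = G.src e → ¬ π.Vertical e → ¬ π.Vertical f →
      ¬ π.Vertical (C.t e f) ∧ π.onE (C.t e f) = CB.t (π.onE e) (π.onE f))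

/-- `π` is a signed GKM fibration of signed GKM graphs. -/
def IsSignedGKMFib {m : ℕ} {G B : OrGraph} (sΓ : G.E → Zm m) (sB : B.E → Zm m)
    (π : GraphFib G B) : Prop :=
  π.IsFib ∧ ∃ (C : Connection G) (CB : Connection B),
    SignedCompat G sΓ C ∧ SignedCompat B sB CB ∧ SignedGKMFibCompat sΓ sB π C CB

/-- `(π, ft)` is a fiberwise signed fibration: `ft` is a lift of `αΓ` on the
vertical edges, satisfying the congruence condition w.r.t. suitable connections. -/
def IsFiberwiseSigned {m : ℕ} {G B : OrGraph} (αΓ : G.E → ZmPM m) (αB : B.E → ZmPM m)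
    (π : GraphFib G B) (ft : G.E → Zm m) : Prop :=
  π.IsFib ∧
  (∀ e, π.Vertical e → pm (ft e) = αΓ e) ∧
  (∀ e, π.Vertical e → ft (G.rev e) = - ft e) ∧
  ∃ (C : Connection G) (CB : Connection B),
    UnsignedCompat G αΓ C ∧ UnsignedCompat B αB CB ∧ GKMFibCompat αΓ αB π C CB ∧
    ∀ e f, G.src f = G.src e → π.Vertical f →
      ∃ (g : Zm m) (c : ℤ), pm g = αΓ e ∧ ft (C.t e f) = ft f + c • g

/-- Isomorphism of unsigned GKM graphs. -/
structure GKMIso {m : ℕ} (G : OrGraph) (α : G.E → ZmPM m)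
    (G' : OrGraph) (α' : G'.E → ZmPM m) : Type where
  fV : G.V ≃ G'.V
  fE : G.E ≃ G'.E
  φ : Zm m ≃ₗ[ℤ] Zm m
  src_comm : ∀ e, G'.src (fE e) = fV (G.src e)
  dst_comm : ∀ e, G'.dst (fE e) = fV (G.dst e)
  rev_comm : ∀ e, fE (G.rev e) = G'.rev (fE e)
  lab : ∀ (e : G.E) (a : Zm m), pm a = α e → α' (fE e) = pm (φ a)

/-- Isomorphism of signed GKM graphs. -/
structure SignedGKMIso {m : ℕ} (G : OrGraph) (α : G.E → Zm m)
    (G' : OrGraph) (α' : G'.E → Zm m) : Type where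
  fV : G.V ≃ G'.V
  fE : G.E ≃ G'.E
  φ : Zm m ≃ₗ[ℤ] Zm m
  src_comm : ∀ e, G'.src (fE e) = fV (G.src e)
  dst_comm : ∀ e, G'.dst (fE e) = fV (G.dst e)
  rev_comm : ∀ e, fE (G.rev e) = G'.rev (fE e)
  lab : ∀ e, α' (fE e) = φ (α e)

/-- Equivalence of fiberwise signed fibrations over the same base (identity on `ℤ^m`). -/
structure FSFEquiv {m : ℕ} {G B G' : OrGraph}
    (αΓ : G.E → ZmPM m) (π : GraphFib G B) (ft : G.E → Zm m)
    (αΓ' : G'.E → ZmPM m) (π' : GraphFib G' B) (ft' : G'.E → Zm m) : Type where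
  fV : G.V ≃ G'.V
  fE : G.E ≃ G'.E
  src_comm : ∀ e, G'.src (fE e) = fV (G.src e)
  dst_comm : ∀ e, G'.dst (fE e) = fV (G.dst e)
  rev_comm : ∀ e, fE (G.rev e) = G'.rev (fE e)
  lab : ∀ e, αΓ' (fE e) = αΓ e
  baseV : ∀ p, π'.onV (fV p) = π.onV p
  baseE : ∀ e, ¬ π.Vertical e → π'.onE (fE e) = π.onE e
  fiblab : ∀ e, π.Vertical e → ft' (fE e) = ft e

/-- Equivalence of signed GKM fibrations over the same base (identity on `ℤ^m`). -/
structure SFEquiv {m : ℕ} {G B G' : OrGraph}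
    (sΓ : G.E → Zm m) (π : GraphFib G B)
    (sΓ' : G'.E → Zm m) (π' : GraphFib G' B) : Type where
  fV : G.V ≃ G'.V
  fE : G.E ≃ G'.E
  src_comm : ∀ e, G'.src (fE e) = fV (G.src e)
  dst_comm : ∀ e, G'.dst (fE e) = fV (G.dst e)
  rev_comm : ∀ e, fE (G.rev e) = G'.rev (fE e)
  lab : ∀ e, sΓ' (fE e) = sΓ e
  baseV : ∀ p, π'.onV (fV p) = π.onV p
  baseE : ∀ e, ¬ π.Vertical e → π'.onE (fE e) = π.onE e

/-- Realizing `ℤ²` inside `ℝ² = ℂ`. -/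
noncomputable def toC (a : Zm 2) : ℂ := (a 0 : ℝ) + (a 1 : ℝ) * Complex.I

def cross (a b : ℂ) : ℝ := a.re * b.im - a.im * b.re

/-- A vertex of a signed GKM graph with labels in `ℤ²` is interior if the cone
spanned by the labels of the edges emanating from it is all of `ℝ²`. -/
def InteriorVtx (G : OrGraph) (α : G.E → Zm 2) (p : G.V) : Prop :=
  ∀ x : ℂ, ∃ c : G.E → ℝ, (∀ e, 0 ≤ c e) ∧
    x = ∑ e ∈ Finset.univ.filter (fun e : G.E => G.src e = p), c e • toC (α e)

/-- The angle from `w` to `w'`, represented in `[0, 2π)` if `ε = true`,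
and in `(-2π, 0]` if `ε = false`. -/
noncomputable def angTo (ε : Bool) (w w' : ℂ) : ℝ :=
  if ε then (if (w' / w).arg < 0 then (w' / w).arg + 2 * Real.pi else (w' / w).arg)
  else (if 0 < (w' / w).arg then (w' / w).arg - 2 * Real.pi else (w' / w).arg)

/-- The winding number of a cyclic sequence of vectors w.r.t. the orientation `ε`. -/
noncomputable def winding {nn : ℕ} [NeZero nn] (w : ZMod nn → ℂ) (ε : Bool) : ℝ :=
  (1 / (2 * Real.pi)) * ∑ i : ZMod nn, |angTo ε (w i) (w (i + 1))|

def LocallyConvex {nn : ℕ} (w : ZMod nn → ℂ) : Prop :=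
  (∀ i, angTo true (w i) (w (i + 1)) ∈ Set.Ioo 0 Real.pi) ∨
  (∀ i, angTo false (w i) (w (i + 1)) ∈ Set.Ioo (-Real.pi) 0)

/-- `ε` is the preferred orientation of the locally convex sequence `w`. -/
def Preferred {nn : ℕ} (w : ZMod nn → ℂ) (ε : Bool) : Prop :=
  (ε = true ∧ ∀ i, angTo true (w i) (w (i + 1)) ∈ Set.Ioo 0 Real.pi) ∨
  (ε = false ∧ ∀ i, angTo false (w i) (w (i + 1)) ∈ Set.Ioo (-Real.pi) 0)

/-- `P` lists the vertices of a strictly convex polygon in cyclic order. -/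
def ConvexCyclic {nn : ℕ} (P : ZMod nn → ℂ) : Prop :=
  (∀ i j, j ≠ i → j ≠ i + 1 → 0 < cross (P (i + 1) - P i) (P j - P i)) ∨
  (∀ i j, j ≠ i → j ≠ i + 1 → cross (P (i + 1) - P i) (P j - P i) < 0)

def SubAdj (G : OrGraph) (S : Set G.E) (v w : G.V) : Prop :=
  ∃ e ∈ S, G.src e = v ∧ G.dst e = w

/-- `S` is (the edge set of) a connected `2`-valent signed GKM subgraph of `(G, α)`. -/
def IsSigned2ValentSub (G : OrGraph) (α : G.E → Zm 2) (S : Set G.E) : Prop :=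
  S.Nonempty ∧
  (∀ e ∈ S, G.rev e ∈ S) ∧
  (∀ v : G.V, (∃ e ∈ S, G.src e = v) → Nat.card {e : G.E // e ∈ S ∧ G.src e = v} = 2) ∧
  (∀ v w : G.V, (∃ e ∈ S, G.src e = v) → (∃ e ∈ S, G.src e = w) →
      Relation.ReflTransGen (SubAdj G S) v w) ∧
  ∃ T : G.E → G.E → G.E,
    (∀ e f, e ∈ S → f ∈ S → G.src f = G.src e → T e f ∈ S ∧ G.src (T e f) = G.dst e) ∧
    (∀ e, e ∈ S → T e e = G.rev e) ∧
    (∀ e f, e ∈ S → f ∈ S → G.src f = G.src e → T (G.rev e) (T e f) = f) ∧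
    (∀ e f, e ∈ S → f ∈ S → G.src f = G.src e → ∃ c : ℤ, α (T e f) = α f + c • α e)

/-- A `2`-valent signed GKM subgraph of polytope type: it is a cycle realized by the
boundary edges of a simple convex `2`-polytope, with labels representing the slopes. -/
def IsPolytopeTypeSub (G : OrGraph) (α : G.E → Zm 2) (S : Set G.E) : Prop :=
  IsSigned2ValentSub G α S ∧
  ∃ np : ℕ, 3 ≤ np ∧
    ∃ (cyc : ZMod np → G.E) (P : ZMod np → ℂ) (t : ZMod np → ℝ),
      (∀ i, cyc i ∈ S) ∧
      (∀ ed ∈ S, ∃ i, ed = cyc i ∨ ed = G.rev (cyc i)) ∧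
      (∀ i, G.dst (cyc i) = G.src (cyc (i + 1))) ∧
      ConvexCyclic P ∧
      (∀ i, 0 < t i) ∧
      (∀ i, P (i + 1) - P i = t i • toC (α (cyc i)))

/-- A fibration over an `n`-gon base is of product type if the lifts of a path
once around the base are closed. -/
def ProductType {G B : OrGraph} (π : GraphFib G B) {nn : ℕ} (eB : ZMod nn → B.E) : Prop :=
  ∃ l : ZMod nn → G.E,
    ∀ i, ¬ π.Vertical (l i) ∧ π.onE (l i) = eB i ∧ G.dst (l i) = G.src (l (i + 1))

/-- `ℤ`-indexed `n`-gon data for a `2`-valent base graph. -/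
structure ZGonData (B : OrGraph) (n : ℕ) where
  v : ℤ → B.V
  eB : ℤ → B.E
  v_per : ∀ i, v (i + n) = v i
  e_per : ∀ i, eB (i + n) = eB i
  src_e : ∀ i, B.src (eB i) = v i
  dst_e : ∀ i, B.dst (eB i) = v (i + 1)
  v_inj : ∀ i j : ℤ, 0 ≤ i → i < n → 0 ≤ j → j < n → v i = v j → i = j
  v_surj : ∀ w : B.V, ∃ i : ℤ, v i = w
  e_cover : ∀ ed : B.E, ∃ i : ℤ, ed = eB i ∨ ed = B.rev (eB i)

/-- A choice of sign representatives `γ_i` of the base labels with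
`γ_i ≡ -γ_{i+2} (mod γ_{i+1})` for all `i ∈ ℤ`. -/
structure GammaData {B : OrGraph} {n : ℕ} (αB : B.E → ZmPM 2) (D : ZGonData B n) where
  γ : ℤ → Zm 2
  lift : ∀ i, pm (γ i) = αB (D.eB i)
  cong : ∀ i, ∃ c : ℤ, γ i + γ (i + 2) = c • γ (i + 1)

/-- A fiberwise signed `3`-valent GKM fibration over `(B, αB)`. -/
structure FSFOver (B : OrGraph) (αB : B.E → ZmPM 2) : Type 1 where
  G : OrGraph
  αΓ : G.E → ZmPM 2
  hΓ : IsGKM G 3 αΓ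
  π : GraphFib G B
  ft : G.E → Zm 2
  isfs : IsFiberwiseSigned αΓ αB π ft

def FSFOver.Equiv {B : OrGraph} {αB : B.E → ZmPM 2} (F F' : FSFOver B αB) : Prop :=
  Nonempty (FSFEquiv F.αΓ F.π F.ft F'.αΓ F'.π F'.ft)

/-- A signed `3`-valent GKM fibration over the signed graph `(B, sB)`. -/
structure SFOver (B : OrGraph) (sB : B.E → Zm 2) : Type 1 where
  G : OrGraph
  sΓ : G.E → Zm 2
  hΓ : IsSignedGKM G 3 sΓ
  π : GraphFib G B
  issf : IsSignedGKMFib sΓ sB π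

def SFOver.Equiv {B : OrGraph} {sB : B.E → Zm 2} (F F' : SFOver B sB) : Prop :=
  Nonempty (SFEquiv F.sΓ F.π F'.sΓ F'.π)

/-- The fibration `F` realizes the classification datum `([k], η)` w.r.t. the fixed data. -/
def RealizesFS {B : OrGraph} {αB : B.E → ZmPM 2} {n : ℕ} (D : ZGonData B n)
    (Γd : GammaData αB D) (F : FSFOver B αB) (k : ZMod n → ℤ) (η : Bool) : Prop :=
  (η = false ↔ ProductType F.π (fun i : ZMod n => D.eB i.val)) ∧
  ∃ (gE : ℤ → F.G.E) (αf : ℤ → Zm 2) (kk : ℤ → ℤ),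
    (∀ i, F.π.Vertical (gE i)) ∧
    (∀ i, F.π.onV (F.G.src (gE i)) = D.v i) ∧
    (∀ i, gE (i + n) = gE i ∨ gE (i + n) = F.G.rev (gE i)) ∧
    (∀ i, pm (αf i) = F.αΓ (gE i)) ∧
    (∀ i, ∃ c : ℤ, αf (i + 1) = αf i + c • Γd.γ i) ∧
    (∀ i, αf i = kk i • Γd.γ (i - 1) - kk (i - 1) • Γd.γ i) ∧
    (∀ i, kk i ≠ 0) ∧
    (∀ i : ZMod n, k i = kk i.val)

/-- The signed fibration `F` realizes the classification datum `([k], η)`. -/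
def RealizesS {B : OrGraph} (sB : B.E → Zm 2) {αB : B.E → ZmPM 2} {n : ℕ}
    (D : ZGonData B n) (Γd : GammaData αB D) (F : SFOver B sB)
    (k : ZMod n → ℤ) (η : Bool) : Prop :=
  (η = false ↔ ProductType F.π (fun i : ZMod n => D.eB i.val)) ∧
  ∃ (gE : ℤ → F.G.E) (αf : ℤ → Zm 2) (kk : ℤ → ℤ),
    (∀ i, F.π.Vertical (gE i)) ∧
    (∀ i, F.π.onV (F.G.src (gE i)) = D.v i) ∧
    (∀ i, gE (i + n) = gE i ∨ gE (i + n) = F.G.rev (gE i)) ∧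
    (∀ i, pm (αf i) = pm (F.sΓ (gE i))) ∧
    (∀ i, ∃ c : ℤ, αf (i + 1) = αf i + c • Γd.γ i) ∧
    (∀ i, αf i = kk i • Γd.γ (i - 1) - kk (i - 1) • Γd.γ i) ∧
    (∀ i, kk i ≠ 0) ∧
    (∀ i : ZMod n, k i = kk i.val)

def KRel (n : ℕ) (a b : {k : ZMod n → ℤ // ∀ i, k i ≠ 0}) : Prop :=
  a.1 = b.1 ∨ a.1 = - b.1

/-- `((ℤ∖{0})^n)/±1`. -/
def KClass (n : ℕ) := Quot (KRel n)

/-- The Section 7 setting: a signed GKM fibration of twisted type of a `3`-valent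
signed GKM graph `Γ` over `B`, the boundary of a 2-dimensional Delzant polytope with
`n` vertices, with `Γ` having `n-1` interior vertices; with the basic edges `f i`, `h i`
over `e i` and the fiber edges `g i`. -/
structure Section7 : Type 1 where
  n : ℕ
  hn : 3 ≤ n
  G : OrGraph
  B : OrGraph
  aG : G.E → Zm 2
  aB : B.E → Zm 2
  hG : IsSignedGKM G 3 aG
  hB : IsSignedGKM B 2 aB
  π : GraphFib G B
  hfib : IsSignedGKMFib aG aB π
  v : ZMod n → B.V
  e : ZMod n → B.E
  v_bij : Function.Bijective v
  src_e : ∀ i, B.src (e i) = v i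
  dst_e : ∀ i, B.dst (e i) = v (i + 1)
  e_cover : ∀ ed : B.E, ∃ i, ed = e i ∨ ed = B.rev (e i)
  P : ZMod n → ℂ
  tl : ZMod n → ℝ
  tl_pos : ∀ i, 0 < tl i
  polygon : ConvexCyclic P
  slope : ∀ i, P (i + 1) - P i = tl i • toC (aB (e i))
  delzant : ∀ i, (aB (e (i - 1)) 0) * (aB (e i) 1) - (aB (e (i - 1)) 1) * (aB (e i) 0) = 1 ∨
                 (aB (e (i - 1)) 0) * (aB (e i) 1) - (aB (e (i - 1)) 1) * (aB (e i) 0) = -1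
  f : ZMod n → G.E
  h : ZMod n → G.E
  g : ZMod n → G.E
  f_horiz : ∀ i, ¬ π.Vertical (f i)
  h_horiz : ∀ i, ¬ π.Vertical (h i)
  f_over : ∀ i, π.onE (f i) = e i
  h_over : ∀ i, π.onE (h i) = e i
  f_ne_h : ∀ i, f i ≠ h i
  g_vert : ∀ i, π.Vertical (g i)
  g_src : ∀ i, G.src (g i) = G.src (f i)
  g_dst : ∀ i, G.dst (g i) = G.src (h i)
  chain_f : ∀ i : ZMod n, i + 1 ≠ 0 → G.dst (f i) = G.src (f (i + 1))
  chain_h : ∀ i : ZMod n, i + 1 ≠ 0 → G.dst (h i) = G.src (h (i + 1))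
  twist_f : G.dst (f (-1)) = G.src (h 0)
  twist_h : G.dst (h (-1)) = G.src (f 0)
  k : ZMod n → ℤ
  k_ne : ∀ i, k i ≠ 0
  fiberweight : ∀ i, aG (g i) =
    k i • aB (e (i - 1)) - (if i = 0 then - k (i - 1) else k (i - 1)) • aB (e i)
  interior_count : Nat.card {p : G.V // InteriorVtx G aG p} = n - 1

/-- The type II signed structure: the signs of the labels of every second pair
of basic edges are reversed. -/
noncomputable def Section7.alphaII (S : Section7) : S.G.E → Zm 2 :=
  fun ed =>
    if ∃ i : ZMod S.n, Odd i.val ∧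
        (ed = S.f i ∨ ed = S.h i ∨ ed = S.G.rev (S.f i) ∨ ed = S.G.rev (S.h i))
    then - S.aG ed else S.aG ed


/-!
`B'` and `Γ'` arise from `B` and `Γ` by multiplying the labels with the edge sign
`σ(e_i) = (-1)^i`, pulled back along `π` (vertical edges keep their labels). On an `n`-gon the
connection is forced, and for `n` even it preserves `σ`; after adjusting the connection of `Γ`
so that transport along vertical edges preserves base edges, it preserves the pulled-back sign
too. Multiplying the labels by a sign invariant under reversal and transport preserves every
GKM condition, so `Γ' → B'` is a signed GKM fibration, and the unchanged fiber weights,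
rewritten in the labels of `B'`, give the new `k`'s.

At a vertex over `v_i` the fiber weight is a combination of the two horizontal labels, and the
vertex is interior iff both coefficients are negative. Hence `Γ` has an interior vertex over
`v_i` iff the two fiber weight coefficients there have the same sign, while `Γ'` has one iff
they have opposite signs: together `Γ` and `Γ'` have `n` interior vertices.
-/

lemma OrGraph.dst_rev (G : OrGraph) (e : G.E) : G.dst (G.rev e) = G.src e := by
  rw [← G.src_rev, G.rev_rev]

lemma OrGraph.filter_src_eq_of_card_eq_three (G : OrGraph) {p : G.V}
    (hp : Fintype.card {e : G.E // G.src e = p} = 3) {x y z : G.E}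
    (hx : G.src x = p) (hy : G.src y = p) (hz : G.src z = p)
    (hxy : x ≠ y) (hxz : x ≠ z) (hyz : y ≠ z) :
    Finset.univ.filter (fun e : G.E => G.src e = p) = {x, y, z} := by
  refine (Finset.eq_of_subset_of_card_le ?_ ?_).symm
  · intro e he
    simp only [Finset.mem_insert, Finset.mem_singleton] at he
    rcases he with rfl | rfl | rfl <;> simpa
  · rw [← Fintype.card_subtype, hp, Finset.card_eq_three.mpr ⟨x, y, z, hxy, hxz, hyz, rfl⟩]

lemma Connection.t_ne_rev {G : OrGraph} (C : Connection G) {e f : G.E}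
    (hsrc : G.src f = G.src e) (hne : f ≠ e) : C.t e f ≠ G.rev e := by
  intro h
  have := C.t_inv e f hsrc
  rw [h, C.t_self, G.rev_rev] at this
  exact hne this.symm

lemma Indep.units_smul {m : ℕ} {a b : Zm m} (h : Indep a b) (u v : ℤˣ) :
    Indep (u • a) (v • b) := by
  intro c d hcd
  rw [Units.smul_def, Units.smul_def, smul_smul, smul_smul] at hcd
  obtain ⟨hc, hd⟩ := h _ _ hcd
  exact ⟨(mul_eq_zero.mp hc).resolve_right u.ne_zero, (mul_eq_zero.mp hd).resolve_right v.ne_zero⟩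

theorem SignedCompat.units_smul {m : ℕ} {G : OrGraph} {α : G.E → Zm m} {C : Connection G}
    (h : SignedCompat G α C) (σ : G.E → ℤˣ) (hrev : ∀ e, σ (G.rev e) = σ e)
    (ht : ∀ e f, G.src f = G.src e → σ (C.t e f) = σ f) :
    SignedCompat G (fun e => σ e • α e) C := by
  obtain ⟨hind, htr, hneg⟩ := h
  refine ⟨fun e f hsrc hne => (hind e f hsrc hne).units_smul _ _, fun e f hsrc => ?_,
    fun e => by simp only [hrev, hneg, smul_neg]⟩
  obtain ⟨c, hc⟩ := htr e f hsrc
  refine ⟨σ f * c * σ e, ?_⟩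
  have hσe : ((σ e : ℤ) * σ e) = 1 := Int.units_coe_mul_self (σ e)
  simp only [ht e f hsrc, hc, Units.smul_def, smul_add, smul_smul, mul_assoc _ _ (σ e : ℤ), hσe,
    mul_one]

namespace GraphFib

variable {G B : OrGraph} (π : GraphFib G B)

lemma vertical_rev (e : G.E) : π.Vertical (G.rev e) ↔ π.Vertical e := by
  rw [GraphFib.Vertical, GraphFib.Vertical, G.src_rev, G.dst_rev, eq_comm]

variable {π}

lemma IsFib.exists_lift (hπ : π.IsFib) {p : G.V} {b : B.E} (hb : B.src b = π.onV p) :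
    ∃ y, G.src y = p ∧ ¬ π.Vertical y ∧ π.onE y = b := by
  obtain ⟨⟨y, hy, hyv⟩, hyb⟩ := (hπ p).2 ⟨b, hb⟩
  exact ⟨y, hy, hyv, congrArg Subtype.val hyb⟩

lemma IsFib.lift_unique (hπ : π.IsFib) {y y' : G.E} (hsrc : G.src y' = G.src y)
    (hy : ¬ π.Vertical y) (hy' : ¬ π.Vertical y') (hE : π.onE y' = π.onE y) : y' = y :=
  congrArg Subtype.val ((hπ (G.src y)).1 (a₁ := ⟨y', hsrc, hy'⟩) (a₂ := ⟨y, rfl, hy⟩)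
    (Subtype.ext hE))

lemma src_onE_of_vertical {e f : G.E} (he : π.Vertical e) (hf : ¬ π.Vertical f)
    (hsrc : G.src f = G.src e) : B.src (π.onE f) = π.onV (G.dst e) := by
  rw [π.src_onE f hf, hsrc, he]

section Straighten

variable (hπ : π.IsFib) (C : Connection G)

/-- Transport along `C`, except that along a vertical edge a horizontal edge goes to the
horizontal lift of its own base edge, which a GKM fibration does not require. -/
noncomputable def straightenT (e f : G.E) : G.E :=
  if h : π.Vertical e ∧ ¬ π.Vertical f ∧ G.src f = G.src e then
    (hπ.exists_lift (src_onE_of_vertical h.1 h.2.1 h.2.2)).choose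
  else C.t e f

lemma straightenT_of_not {e f : G.E} (h : ¬ (π.Vertical e ∧ ¬ π.Vertical f)) :
    straightenT hπ C e f = C.t e f :=
  dif_neg fun h' => h ⟨h'.1, h'.2.1⟩

lemma straightenT_spec {e f : G.E} (he : π.Vertical e) (hf : ¬ π.Vertical f)
    (hsrc : G.src f = G.src e) :
    G.src (straightenT hπ C e f) = G.dst e ∧ ¬ π.Vertical (straightenT hπ C e f) ∧
      π.onE (straightenT hπ C e f) = π.onE f := by
  rw [straightenT, dif_pos ⟨he, hf, hsrc⟩]
  exact (hπ.exists_lift (src_onE_of_vertical he hf hsrc)).choose_spec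

noncomputable def straighten
    (hC : ∀ e f, G.src f = G.src e → π.Vertical f → π.Vertical (C.t e f)) : Connection G where
  t := straightenT hπ C
  src_t e f hsrc := by
    by_cases h : π.Vertical e ∧ ¬ π.Vertical f
    · exact (straightenT_spec hπ C h.1 h.2 hsrc).1
    · rw [straightenT_of_not hπ C h]
      exact C.src_t e f hsrc
  t_self e := by
    rw [straightenT_of_not hπ C (fun h => h.2 h.1)]
    exact C.t_self e
  t_inv e f hsrc := by
    by_cases he : π.Vertical e
    · have he' : π.Vertical (G.rev e) := (π.vertical_rev e).mpr he
      by_cases hf : π.Vertical f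
      · have hte : π.Vertical (C.t e f) := hC e f hsrc hf
        rw [straightenT_of_not hπ C (fun h => h.2 hf),
          straightenT_of_not hπ C (fun h => h.2 hte)]
        exact C.t_inv e f hsrc
      · obtain ⟨hy, hyv, hyE⟩ := straightenT_spec hπ C he hf hsrc
        have hsrc' : G.src (straightenT hπ C e f) = G.src (G.rev e) := by rw [hy, G.src_rev]
        obtain ⟨hz, hzv, hzE⟩ := straightenT_spec hπ C he' hyv hsrc'
        exact hπ.lift_unique (by rw [hz, G.dst_rev, hsrc]) hf hzv (hzE.trans hyE)
    · have he' : ¬ π.Vertical (G.rev e) := fun h => he ((π.vertical_rev e).mp h)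
      rw [straightenT_of_not hπ C (fun h => he h.1), straightenT_of_not hπ C (fun h => he' h.1)]
      exact C.t_inv e f hsrc

end Straighten

variable {m : ℕ} {sΓ : G.E → Zm m} {sB : B.E → Zm m}
  {C : Connection G} {CB : Connection B}

lemma signedCompat_straighten (hπ : π.IsFib) (hC : SignedCompat G sΓ C)
    (hfc : SignedGKMFibCompat sΓ sB π C CB) :
    SignedCompat G sΓ (straighten hπ C hfc.2.1) := by
  refine ⟨hC.1, fun e f hsrc => ?_, hC.2.2⟩
  by_cases h : π.Vertical e ∧ ¬ π.Vertical f
  · obtain ⟨-, htv, htE⟩ := straightenT_spec hπ C h.1 h.2 hsrc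
    refine ⟨0, ?_⟩
    rw [zero_smul, add_zero]
    change sΓ (straightenT hπ C e f) = sΓ f
    rw [hfc.1 _ htv, hfc.1 f h.2, htE]
  · change ∃ c : ℤ, sΓ (straightenT hπ C e f) = _
    rw [straightenT_of_not hπ C h]
    exact hC.2.1 e f hsrc

lemma signedGKMFibCompat_straighten (hπ : π.IsFib) (hfc : SignedGKMFibCompat sΓ sB π C CB) :
    SignedGKMFibCompat sΓ sB π (straighten hπ C hfc.2.1) CB := by
  refine ⟨hfc.1, fun e f hsrc hf => ?_, fun e f hsrc he hf => ?_⟩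
  · change π.Vertical (straightenT hπ C e f)
    rw [straightenT_of_not hπ C (fun h => h.2 hf)]
    exact hfc.2.1 e f hsrc hf
  · change ¬ π.Vertical (straightenT hπ C e f) ∧ π.onE (straightenT hπ C e f) = _
    rw [straightenT_of_not hπ C (fun h => he h.1)]
    exact hfc.2.2 e f hsrc he hf

variable (π) in
noncomputable def pullSign (σ : B.E → ℤˣ) (x : G.E) : ℤˣ :=
  if π.Vertical x then 1 else σ (π.onE x)

lemma pullSign_of_vertical (σ : B.E → ℤˣ) {x : G.E} (hx : π.Vertical x) :
    π.pullSign σ x = 1 := if_pos hx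

lemma pullSign_of_not_vertical (σ : B.E → ℤˣ) {x : G.E} (hx : ¬ π.Vertical x) :
    π.pullSign σ x = σ (π.onE x) := if_neg hx

lemma pullSign_rev {σ : B.E → ℤˣ} (hσ : ∀ b, σ (B.rev b) = σ b) (x : G.E) :
    π.pullSign σ (G.rev x) = π.pullSign σ x := by
  by_cases hx : π.Vertical x
  · rw [pullSign_of_vertical σ hx, pullSign_of_vertical σ ((π.vertical_rev x).mpr hx)]
  · rw [pullSign_of_not_vertical σ hx,
      pullSign_of_not_vertical σ (fun h => hx ((π.vertical_rev x).mp h)), π.rev_onE x hx, hσ]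

lemma pullSign_straighten_t (hπ : π.IsFib) (hfc : SignedGKMFibCompat sΓ sB π C CB)
    {σ : B.E → ℤˣ} (hσ : ∀ b c, B.src c = B.src b → σ (CB.t b c) = σ c)
    {e f : G.E} (hsrc : G.src f = G.src e) :
    π.pullSign σ ((straighten hπ C hfc.2.1).t e f) = π.pullSign σ f := by
  change π.pullSign σ (straightenT hπ C e f) = _
  by_cases hf : π.Vertical f
  · rw [straightenT_of_not hπ C (fun h => h.2 hf), pullSign_of_vertical σ hf,
      pullSign_of_vertical σ (hfc.2.1 e f hsrc hf)]
  by_cases he : π.Vertical e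
  · obtain ⟨-, htv, htE⟩ := straightenT_spec hπ C he hf hsrc
    rw [pullSign_of_not_vertical σ htv, pullSign_of_not_vertical σ hf, htE]
  · obtain ⟨htv, htE⟩ := hfc.2.2 e f hsrc he hf
    rw [straightenT_of_not hπ C (fun h => he h.1), pullSign_of_not_vertical σ htv,
      pullSign_of_not_vertical σ hf, htE]
    exact hσ _ _ (by rw [π.src_onE f hf, π.src_onE e he, hsrc])

theorem isSignedGKMFib_units_smul (hπ : π.IsFib) (hC : SignedCompat G sΓ C)
    (hCB : SignedCompat B sB CB) (hfc : SignedGKMFibCompat sΓ sB π C CB) (σ : B.E → ℤˣ)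
    (hσrev : ∀ b, σ (B.rev b) = σ b) (hσt : ∀ b c, B.src c = B.src b → σ (CB.t b c) = σ c) :
    IsSignedGKMFib (fun x => π.pullSign σ x • sΓ x) (fun b => σ b • sB b) π := by
  refine ⟨hπ, straighten hπ C hfc.2.1, CB,
    (signedCompat_straighten hπ hC hfc).units_smul _ (pullSign_rev hσrev)
      (fun e f hsrc => pullSign_straighten_t hπ hfc hσt hsrc),
    hCB.units_smul σ hσrev hσt, ?_⟩
  obtain ⟨hlab, hvert, hhor⟩ := signedGKMFibCompat_straighten hπ hfc
  exact ⟨fun x hx => by simp only [pullSign_of_not_vertical σ hx, hlab x hx], hvert, hhor⟩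

end GraphFib

lemma toC_add (a b : Zm 2) : toC (a + b) = toC a + toC b := by
  simp only [toC, Pi.add_apply]; push_cast; ring

lemma toC_neg (a : Zm 2) : toC (-a) = -toC a := by
  simp only [toC, Pi.neg_apply]; push_cast; ring

lemma toC_sub (a b : Zm 2) : toC (a - b) = toC a - toC b := by
  rw [sub_eq_add_neg, toC_add, toC_neg, ← sub_eq_add_neg]

lemma toC_zsmul (c : ℤ) (a : Zm 2) : toC (c • a) = (c : ℝ) • toC a := by
  simp only [toC, Pi.smul_apply, smul_eq_mul, Complex.real_smul]; push_cast; ring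

lemma toC_units_smul (u : ℤˣ) (a : Zm 2) : toC (u • a) = ((u : ℤ) : ℝ) • toC a := by
  rw [Units.smul_def, toC_zsmul]

lemma cross_toC (a b : Zm 2) : cross (toC a) (toC b) = ((a 0 * b 1 - a 1 * b 0 : ℤ) : ℝ) := by
  simp [cross, toC]

lemma cross_smul_smul (r s : ℝ) (A B : ℂ) : cross (r • A) (s • B) = r * s * cross A B := by
  simp only [cross, Complex.real_smul, Complex.mul_re, Complex.mul_im, Complex.ofReal_re,
    Complex.ofReal_im]
  ring

lemma cross_smul_eq (A B w : ℂ) : (cross A B) • w = (cross w B) • A + (cross A w) • B := by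
  apply Complex.ext <;>
    simp only [cross, Complex.real_smul, Complex.add_re, Complex.add_im, Complex.mul_re,
      Complex.mul_im, Complex.ofReal_re, Complex.ofReal_im] <;> ring

lemma smul_add_smul_eq_zero {A B : ℂ} (hAB : cross A B ≠ 0) {p q : ℝ} (h : p • A + q • B = 0) :
    p = 0 ∧ q = 0 := by
  have hp := congrArg (cross · B) h
  have hq := congrArg (cross A ·) h
  simp only [cross, Complex.real_smul, Complex.add_re, Complex.add_im, Complex.mul_re,
    Complex.mul_im, Complex.ofReal_re, Complex.ofReal_im, Complex.zero_re,
    Complex.zero_im] at hp hq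
  constructor
  · exact (mul_eq_zero.mp (by simp only [cross] at hAB ⊢; linear_combination hp)).resolve_right hAB
  · exact (mul_eq_zero.mp (by simp only [cross] at hAB ⊢; linear_combination hq)).resolve_right hAB

lemma cone_eq_univ_iff {A B : ℂ} (hAB : cross A B ≠ 0) (u v : ℝ) :
    (∀ w : ℂ, ∃ a b c : ℝ, 0 ≤ a ∧ 0 ≤ b ∧ 0 ≤ c ∧ w = a • A + b • B + c • (u • A + v • B)) ↔
      u < 0 ∧ v < 0 := by
  constructor
  · intro h
    obtain ⟨a, b, c, ha, -, hc, hA⟩ := h (-A)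
    obtain ⟨a', b', c', -, hb', hc', hB⟩ := h (-B)
    have hu := (smul_add_smul_eq_zero hAB (p := 1 + a + c * u) (q := b + c * v)
      (by linear_combination (norm := module) -hA)).1
    have hv := (smul_add_smul_eq_zero hAB (p := a' + c' * u) (q := 1 + b' + c' * v)
      (by linear_combination (norm := module) -hB)).2
    constructor
    · by_contra! hu'; nlinarith [mul_nonneg hc hu']
    · by_contra! hv'; nlinarith [mul_nonneg hc' hv']
  · rintro ⟨hu, hv⟩ w
    set p := cross w B / cross A B
    set q := cross A w / cross A B
    have hw : w = p • A + q • B := by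
      rw [← smul_right_inj hAB, cross_smul_eq, smul_add, smul_smul, smul_smul,
        mul_div_cancel₀ _ hAB, mul_div_cancel₀ _ hAB]
    set c := max 0 (max (p / u) (q / v))
    have hpc : c * u ≤ p :=
      (div_le_iff_of_neg hu).mp (le_trans (le_max_left _ _) (le_max_right _ _))
    have hqc : c * v ≤ q :=
      (div_le_iff_of_neg hv).mp (le_trans (le_max_right _ _) (le_max_right _ _))
    refine ⟨p - c * u, q - c * v, c, by linarith, by linarith, le_max_left _ _, ?_⟩
    rw [hw]; module

lemma interiorVtx_iff_cone {G : OrGraph} {α : G.E → Zm 2} {p : G.V} {x y z : G.E}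
    (hp : Finset.univ.filter (fun e : G.E => G.src e = p) = {x, y, z})
    (hxy : x ≠ y) (hxz : x ≠ z) (hyz : y ≠ z) :
    InteriorVtx G α p ↔ ∀ w : ℂ, ∃ a b c : ℝ, 0 ≤ a ∧ 0 ≤ b ∧ 0 ≤ c ∧
      w = a • toC (α x) + b • toC (α y) + c • toC (α z) := by
  have hsum : ∀ c : G.E → ℝ,
      ∑ e ∈ Finset.univ.filter (fun e : G.E => G.src e = p), c e • toC (α e) =
        c x • toC (α x) + c y • toC (α y) + c z • toC (α z) := by
    intro c
    rw [hp, Finset.sum_insert (by simp [hxy, hxz]), Finset.sum_insert (by simp [hyz]),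
      Finset.sum_singleton, add_assoc]
  simp only [InteriorVtx, hsum]
  refine forall_congr' fun w => ⟨fun ⟨c, hc, hw⟩ => ⟨c x, c y, c z, hc x, hc y, hc z, hw⟩, ?_⟩
  rintro ⟨a, b, c, ha, hb, hc, hw⟩
  refine ⟨fun e => if e = x then a else if e = y then b else if e = z then c else 0,
    fun e => ?_, ?_⟩
  · dsimp only
    split_ifs <;> first | assumption | exact le_rfl
  · dsimp only
    rw [if_pos rfl, if_neg hxy.symm, if_pos rfl, if_neg hxz.symm, if_neg hyz.symm, if_pos rfl, hw]

lemma interiorVtx_iff_of_three_edges {G : OrGraph} {α : G.E → Zm 2} {p : G.V} {x y z : G.E}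
    (hp : Finset.univ.filter (fun e : G.E => G.src e = p) = {x, y, z})
    (hxy : x ≠ y) (hxz : x ≠ z) (hyz : y ≠ z)
    (hxy' : cross (toC (α x)) (toC (α y)) ≠ 0) {u v : ℝ}
    (hz : toC (α z) = u • toC (α x) + v • toC (α y)) :
    InteriorVtx G α p ↔ u < 0 ∧ v < 0 := by
  rw [interiorVtx_iff_cone hp hxy hxz hyz, hz]
  exact cone_eq_univ_iff hxy' u v

lemma Nat.card_pos_add_card_neg {ι : Type*} [Finite ι] (x : ι → ℤ) (hx : ∀ i, x i ≠ 0) :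
    Nat.card {i // 0 < x i} + Nat.card {i // x i < 0} = Nat.card ι := by
  rw [← Nat.card_sum]
  refine Nat.card_congr ((Equiv.sumCongr (Equiv.refl _) (Equiv.subtypeEquivRight fun i => ?_)).trans
    (Equiv.sumCompl fun i => 0 < x i))
  exact ⟨fun h => not_lt.mpr h.le, fun h => lt_of_le_of_ne (not_lt.mp h) (hx i)⟩

lemma ZMod.neg_one_pow_val_add {n : ℕ} [NeZero n] (hn : Even n) (a b : ZMod n) :
    (-1 : ℤˣ) ^ (a + b).val = (-1) ^ a.val * (-1) ^ b.val := by
  rw [ZMod.val_add, ← pow_add]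
  conv_rhs => rw [← Nat.mod_add_div (a.val + b.val) n, pow_add, pow_mul, hn.neg_one_pow, one_pow,
    mul_one]

namespace Section7

variable (S : Section7)

instance : NeZero S.n := ⟨by have := S.hn; omega⟩

lemma aB_rev (b : S.B.E) : S.aB (S.B.rev b) = -S.aB b := by
  obtain ⟨-, -, CB, hCB⟩ := S.hB
  exact hCB.2.2 b

lemma aG_rev (x : S.G.E) : S.aG (S.G.rev x) = -S.aG x := by
  obtain ⟨-, -, C, hC⟩ := S.hG
  exact hC.2.2 x

lemma aG_of_not_vertical {x : S.G.E} (hx : ¬ S.π.Vertical x) :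
    S.aG x = S.aB (S.π.onE x) := by
  obtain ⟨-, C, CB, -, -, hfc⟩ := S.hfib
  exact hfc.1 x hx

lemma e_injective : Function.Injective S.e := fun i j h =>
  S.v_bij.1 (by rw [← S.src_e, ← S.src_e, h])

lemma zmod_two_ne_zero : (2 : ZMod S.n) ≠ 0 := by
  intro h
  have h2 := (ZMod.natCast_eq_zero_iff 2 S.n).mp (by exact_mod_cast h)
  have := Nat.le_of_dvd (by norm_num) h2
  have := S.hn
  omega

lemma e_ne_rev_e (i j : ZMod S.n) : S.e i ≠ S.B.rev (S.e j) := by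
  intro h
  have h1 : i = j + 1 := S.v_bij.1 (by rw [← S.src_e, ← S.dst_e, h, S.B.src_rev])
  have h2 : i + 1 = j := S.v_bij.1 (by rw [← S.dst_e, ← S.src_e, h, S.B.dst_rev])
  exact S.zmod_two_ne_zero (by linear_combination h2 - h1)

lemma eq_of_mem_e_rev {b : S.B.E} {i j : ZMod S.n} (hi : b = S.e i ∨ b = S.B.rev (S.e i))
    (hj : b = S.e j ∨ b = S.B.rev (S.e j)) : i = j := by
  rcases hi with rfl | rfl <;> rcases hj with h | h
  · exact S.e_injective h
  · exact absurd h (S.e_ne_rev_e i j)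
  · exact absurd h.symm (S.e_ne_rev_e j i)
  · exact S.e_injective (S.B.rev_rev (S.e i) ▸ S.B.rev_rev (S.e j) ▸ congrArg S.B.rev h)

lemma eq_e_or_eq_rev_e_of_src {b : S.B.E} {i : ZMod S.n} (h : S.B.src b = S.v i) :
    b = S.e i ∨ b = S.B.rev (S.e (i - 1)) := by
  obtain ⟨j, rfl | rfl⟩ := S.e_cover b
  · rw [S.src_e] at h
    exact Or.inl (by rw [S.v_bij.1 h])
  · rw [S.B.src_rev, S.dst_e] at h
    exact Or.inr (by rw [← S.v_bij.1 h, add_sub_cancel_right])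

lemma transport_e (CB : Connection S.B) (i : ZMod S.n) :
    CB.t (S.e i) (S.B.rev (S.e (i - 1))) = S.e (i + 1) := by
  have hsrc : S.B.src (S.B.rev (S.e (i - 1))) = S.B.src (S.e i) := by
    rw [S.B.src_rev, S.dst_e, S.src_e, sub_add_cancel]
  have ht := CB.src_t _ _ hsrc
  rw [S.dst_e] at ht
  refine (S.eq_e_or_eq_rev_e_of_src ht).resolve_right ?_
  rw [add_sub_cancel_right]
  exact CB.t_ne_rev hsrc (S.e_ne_rev_e i (i - 1)).symm

lemma transport_rev_e (CB : Connection S.B) (i : ZMod S.n) :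
    CB.t (S.B.rev (S.e (i - 1))) (S.e i) = S.B.rev (S.e (i - 2)) := by
  have hsrc : S.B.src (S.e i) = S.B.src (S.B.rev (S.e (i - 1))) := by
    rw [S.B.src_rev, S.dst_e, S.src_e, sub_add_cancel]
  have ht := CB.src_t _ _ hsrc
  rw [S.B.dst_rev, S.src_e] at ht
  refine ((S.eq_e_or_eq_rev_e_of_src ht).resolve_left ?_).trans
    (by rw [sub_sub, one_add_one_eq_two])
  have := CB.t_ne_rev hsrc (S.e_ne_rev_e i (i - 1))
  rwa [S.B.rev_rev] at this

/-- `(-1) ^ i` computed from the representative `i.val ∈ [0, n)`: multiplicative in `i` only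
for `n` even. -/
noncomputable def parity (i : ZMod S.n) : ℤˣ := (-1) ^ i.val

lemma parity_smul (i : ZMod S.n) (a : Zm 2) :
    S.parity i • a = if Odd i.val then -a else a := by
  rcases Nat.even_or_odd i.val with h | h
  · rw [parity, h.neg_one_pow, one_smul, if_neg (Nat.not_odd_iff_even.mpr h)]
  · rw [parity, h.neg_one_pow, Units.neg_smul, one_smul, if_pos h]

lemma parity_sub_one (hev : Even S.n) (i : ZMod S.n) : S.parity (i - 1) = -S.parity i := by
  have : Fact (1 < S.n) := ⟨by have := S.hn; omega⟩
  have h := ZMod.neg_one_pow_val_add hev (i - 1) 1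
  rw [sub_add_cancel, ZMod.val_one, pow_one, mul_neg_one] at h
  rw [parity, parity, h, neg_neg]

lemma parity_add_one (hev : Even S.n) (i : ZMod S.n) : S.parity (i + 1) = S.parity (i - 1) := by
  have h := S.parity_sub_one hev (i + 1)
  rw [add_sub_cancel_right] at h
  rw [S.parity_sub_one hev, h, neg_neg]

lemma parity_sub_two (hev : Even S.n) (i : ZMod S.n) : S.parity (i - 2) = S.parity i := by
  rw [← one_add_one_eq_two, ← sub_sub, S.parity_sub_one hev, S.parity_sub_one hev, neg_neg]

noncomputable def edgeIdx (b : S.B.E) : ZMod S.n := (S.e_cover b).choose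

lemma edgeIdx_eq_iff {b : S.B.E} {i : ZMod S.n} :
    S.edgeIdx b = i ↔ b = S.e i ∨ b = S.B.rev (S.e i) :=
  ⟨fun h => h ▸ (S.e_cover b).choose_spec, S.eq_of_mem_e_rev (S.e_cover b).choose_spec⟩

lemma edgeIdx_e (i : ZMod S.n) : S.edgeIdx (S.e i) = i := S.edgeIdx_eq_iff.mpr (Or.inl rfl)

lemma edgeIdx_rev (b : S.B.E) : S.edgeIdx (S.B.rev b) = S.edgeIdx b := by
  refine S.edgeIdx_eq_iff.mpr ?_
  rcases (S.edgeIdx_eq_iff (b := b)).mp rfl with h | h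
  · exact Or.inr (congrArg S.B.rev h)
  · exact Or.inl ((congrArg S.B.rev h).trans (S.B.rev_rev _))

noncomputable def edgeParity (b : S.B.E) : ℤˣ := S.parity (S.edgeIdx b)

lemma edgeParity_rev (b : S.B.E) : S.edgeParity (S.B.rev b) = S.edgeParity b := by
  rw [edgeParity, edgeParity, edgeIdx_rev]

lemma edgeParity_transport (hev : Even S.n) (CB : Connection S.B) (b c : S.B.E)
    (hsrc : S.B.src c = S.B.src b) : S.edgeParity (CB.t b c) = S.edgeParity c := by
  obtain ⟨i, hi⟩ := S.v_bij.2 (S.B.src b)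
  rcases eq_or_ne c b with rfl | hcb
  · rw [CB.t_self, edgeParity_rev]
  simp only [edgeParity]
  rcases S.eq_e_or_eq_rev_e_of_src hi.symm with rfl | rfl <;>
    rcases S.eq_e_or_eq_rev_e_of_src (hsrc.trans hi.symm) with rfl | rfl
  · exact absurd rfl hcb
  · rw [transport_e, edgeIdx_e, edgeIdx_rev, edgeIdx_e, S.parity_add_one hev]
  · rw [transport_rev_e, edgeIdx_rev, edgeIdx_e, edgeIdx_e, S.parity_sub_two hev]
  · exact absurd rfl hcb

lemma onV_src_f (i : ZMod S.n) : S.π.onV (S.G.src (S.f i)) = S.v i := by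
  rw [← S.π.src_onE _ (S.f_horiz i), S.f_over, S.src_e]

lemma onV_src_h (i : ZMod S.n) : S.π.onV (S.G.src (S.h i)) = S.v i := by
  rw [← S.π.src_onE _ (S.h_horiz i), S.h_over, S.src_e]

lemma src_f_ne_src_h (i : ZMod S.n) : S.G.src (S.f i) ≠ S.G.src (S.h i) := by
  rw [← S.g_src, ← S.g_dst]
  exact S.G.no_loop (S.g i)

/-- The third edge at `src (f i)`, lying over `rev (e (i - 1))`. -/
noncomputable def prevF (i : ZMod S.n) : S.G.E :=
  if i = 0 then S.G.rev (S.h (i - 1)) else S.G.rev (S.f (i - 1))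

noncomputable def prevH (i : ZMod S.n) : S.G.E :=
  if i = 0 then S.G.rev (S.f (i - 1)) else S.G.rev (S.h (i - 1))

lemma src_prevF (i : ZMod S.n) : S.G.src (S.prevF i) = S.G.src (S.f i) := by
  unfold prevF
  split_ifs with h0
  · rw [S.G.src_rev, h0, zero_sub, S.twist_h]
  · rw [S.G.src_rev, S.chain_f _ (by rwa [sub_add_cancel]), sub_add_cancel]

lemma src_prevH (i : ZMod S.n) : S.G.src (S.prevH i) = S.G.src (S.h i) := by
  unfold prevH
  split_ifs with h0
  · rw [S.G.src_rev, h0, zero_sub, S.twist_f]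
  · rw [S.G.src_rev, S.chain_h _ (by rwa [sub_add_cancel]), sub_add_cancel]

lemma prevF_not_vertical (i : ZMod S.n) : ¬ S.π.Vertical (S.prevF i) := by
  unfold prevF
  split_ifs <;> rw [S.π.vertical_rev]
  exacts [S.h_horiz _, S.f_horiz _]

lemma prevH_not_vertical (i : ZMod S.n) : ¬ S.π.Vertical (S.prevH i) := by
  unfold prevH
  split_ifs <;> rw [S.π.vertical_rev]
  exacts [S.f_horiz _, S.h_horiz _]

lemma onE_prevF (i : ZMod S.n) : S.π.onE (S.prevF i) = S.B.rev (S.e (i - 1)) := by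
  unfold prevF
  split_ifs
  · rw [S.π.rev_onE _ (S.h_horiz _), S.h_over]
  · rw [S.π.rev_onE _ (S.f_horiz _), S.f_over]

lemma onE_prevH (i : ZMod S.n) : S.π.onE (S.prevH i) = S.B.rev (S.e (i - 1)) := by
  unfold prevH
  split_ifs
  · rw [S.π.rev_onE _ (S.f_horiz _), S.f_over]
  · rw [S.π.rev_onE _ (S.h_horiz _), S.h_over]

lemma f_ne_prevF (i : ZMod S.n) : S.f i ≠ S.prevF i :=
  fun h => S.e_ne_rev_e i (i - 1) (by rw [← S.f_over, h, S.onE_prevF])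

lemma f_ne_g (i : ZMod S.n) : S.f i ≠ S.g i := fun h => S.f_horiz i (h ▸ S.g_vert i)

lemma prevF_ne_g (i : ZMod S.n) : S.prevF i ≠ S.g i :=
  fun h => S.prevF_not_vertical i (h ▸ S.g_vert i)

lemma h_ne_prevH (i : ZMod S.n) : S.h i ≠ S.prevH i :=
  fun h => S.e_ne_rev_e i (i - 1) (by rw [← S.h_over, h, S.onE_prevH])

lemma h_ne_rev_g (i : ZMod S.n) : S.h i ≠ S.G.rev (S.g i) :=
  fun h => S.h_horiz i (h ▸ (S.π.vertical_rev _).mpr (S.g_vert i))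

lemma prevH_ne_rev_g (i : ZMod S.n) : S.prevH i ≠ S.G.rev (S.g i) :=
  fun h => S.prevH_not_vertical i (h ▸ (S.π.vertical_rev _).mpr (S.g_vert i))

lemma edgesAt_src_f (i : ZMod S.n) :
    Finset.univ.filter (fun x : S.G.E => S.G.src x = S.G.src (S.f i)) = {S.f i, S.prevF i, S.g i} :=
  S.G.filter_src_eq_of_card_eq_three (S.hG.1 _) rfl (S.src_prevF i) (S.g_src i)
    (S.f_ne_prevF i) (S.f_ne_g i) (S.prevF_ne_g i)

lemma edgesAt_src_h (i : ZMod S.n) :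
    Finset.univ.filter (fun x : S.G.E => S.G.src x = S.G.src (S.h i)) =
      {S.h i, S.prevH i, S.G.rev (S.g i)} :=
  S.G.filter_src_eq_of_card_eq_three (S.hG.1 _) rfl (S.src_prevH i)
    (by rw [S.G.src_rev, S.g_dst]) (S.h_ne_prevH i) (S.h_ne_rev_g i) (S.prevH_ne_rev_g i)

lemma mem_edgesAt_src_f {i : ZMod S.n} {x : S.G.E} (hx : S.G.src x = S.G.src (S.f i)) :
    x = S.f i ∨ x = S.prevF i ∨ x = S.g i := by
  have := S.edgesAt_src_f i ▸ Finset.mem_filter.mpr ⟨Finset.mem_univ x, hx⟩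
  simpa only [Finset.mem_insert, Finset.mem_singleton] using this

lemma mem_edgesAt_src_h {i : ZMod S.n} {x : S.G.E} (hx : S.G.src x = S.G.src (S.h i)) :
    x = S.h i ∨ x = S.prevH i ∨ x = S.G.rev (S.g i) := by
  have := S.edgesAt_src_h i ▸ Finset.mem_filter.mpr ⟨Finset.mem_univ x, hx⟩
  simpa only [Finset.mem_insert, Finset.mem_singleton] using this

/-- The sources of the `f i` and `h i` contain `src (f 0)` and are closed under adjacency. -/
lemma exists_eq_src (p : S.G.V) : ∃ i, p = S.G.src (S.f i) ∨ p = S.G.src (S.h i) := by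
  induction S.hG.2.1 (S.G.src (S.f 0)) p with
  | refl => exact ⟨0, Or.inl rfl⟩
  | tail _ hadj ih =>
    obtain ⟨x, rfl, rfl⟩ := hadj
    have hlast : ∀ i : ZMod S.n, i + 1 = 0 → i = -1 := fun i h => eq_neg_of_add_eq_zero_left h
    obtain ⟨i, hi | hi⟩ := ih
    · rcases S.mem_edgesAt_src_f hi with rfl | rfl | rfl
      · by_cases h0 : i + 1 = 0
        · exact ⟨0, Or.inr (by rw [hlast i h0, S.twist_f])⟩
        · exact ⟨i + 1, Or.inl (S.chain_f i h0)⟩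
      · unfold prevF
        split_ifs
        exacts [⟨i - 1, Or.inr (S.G.dst_rev _)⟩, ⟨i - 1, Or.inl (S.G.dst_rev _)⟩]
      · exact ⟨i, Or.inr (S.g_dst i)⟩
    · rcases S.mem_edgesAt_src_h hi with rfl | rfl | rfl
      · by_cases h0 : i + 1 = 0
        · exact ⟨0, Or.inl (by rw [hlast i h0, S.twist_h])⟩
        · exact ⟨i + 1, Or.inr (S.chain_h i h0)⟩
      · unfold prevH
        split_ifs
        exacts [⟨i - 1, Or.inl (S.G.dst_rev _)⟩, ⟨i - 1, Or.inr (S.G.dst_rev _)⟩]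
      · exact ⟨i, Or.inl (by rw [S.G.dst_rev, S.g_src])⟩

lemma eq_src_of_onV {p : S.G.V} {i : ZMod S.n} (hp : S.π.onV p = S.v i) :
    p = S.G.src (S.f i) ∨ p = S.G.src (S.h i) := by
  obtain ⟨j, rfl | rfl⟩ := S.exists_eq_src p
  · rw [S.onV_src_f] at hp
    rw [S.v_bij.1 hp]
    exact Or.inl rfl
  · rw [S.onV_src_h] at hp
    rw [S.v_bij.1 hp]
    exact Or.inr rfl

lemma eq_f_or_eq_h {x : S.G.E} (hx : ¬ S.π.Vertical x) {i : ZMod S.n} (hxe : S.π.onE x = S.e i) :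
    x = S.f i ∨ x = S.h i := by
  have hp : S.π.onV (S.G.src x) = S.v i := by rw [← S.π.src_onE x hx, hxe, S.src_e]
  rcases S.eq_src_of_onV hp with hp | hp
  · exact Or.inl (S.hfib.1.lift_unique hp (S.f_horiz i) hx (by rw [hxe, S.f_over]))
  · exact Or.inr (S.hfib.1.lift_unique hp (S.h_horiz i) hx (by rw [hxe, S.h_over]))

noncomputable def signChange (σ : S.B.E → ℤˣ) : S.G.E → Zm 2 := fun x => S.π.pullSign σ x • S.aG x

lemma signChange_of_vertical (σ : S.B.E → ℤˣ) {x : S.G.E} (hx : S.π.Vertical x) :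
    S.signChange σ x = S.aG x := by
  rw [signChange, GraphFib.pullSign_of_vertical σ hx, one_smul]

lemma signChange_of_not_vertical (σ : S.B.E → ℤˣ) {x : S.G.E} (hx : ¬ S.π.Vertical x) :
    S.signChange σ x = σ (S.π.onE x) • S.aB (S.π.onE x) := by
  rw [signChange, GraphFib.pullSign_of_not_vertical σ hx, S.aG_of_not_vertical hx]

lemma signChange_one : S.signChange 1 = S.aG := by
  funext x
  by_cases hx : S.π.Vertical x
  · exact S.signChange_of_vertical 1 hx
  · rw [signChange, GraphFib.pullSign_of_not_vertical 1 hx, Pi.one_apply, one_smul]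

lemma alphaII_flip_iff (x : S.G.E) :
    (∃ i : ZMod S.n, Odd i.val ∧
        (x = S.f i ∨ x = S.h i ∨ x = S.G.rev (S.f i) ∨ x = S.G.rev (S.h i))) ↔
      ¬ S.π.Vertical x ∧ Odd (S.edgeIdx (S.π.onE x)).val := by
  constructor
  · rintro ⟨i, hi, rfl | rfl | rfl | rfl⟩
    · exact ⟨S.f_horiz i, by rwa [S.f_over, edgeIdx_e]⟩
    · exact ⟨S.h_horiz i, by rwa [S.h_over, edgeIdx_e]⟩
    · exact ⟨by rw [S.π.vertical_rev]; exact S.f_horiz i,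
        by rwa [S.π.rev_onE _ (S.f_horiz i), edgeIdx_rev, S.f_over, edgeIdx_e]⟩
    · exact ⟨by rw [S.π.vertical_rev]; exact S.h_horiz i,
        by rwa [S.π.rev_onE _ (S.h_horiz i), edgeIdx_rev, S.h_over, edgeIdx_e]⟩
  · rintro ⟨hx, hodd⟩
    refine ⟨_, hodd, ?_⟩
    rcases S.edgeIdx_eq_iff.mp rfl with hxe | hxe
    · rcases S.eq_f_or_eq_h hx hxe with h | h
      exacts [Or.inl h, Or.inr (Or.inl h)]
    · have hx' : ¬ S.π.Vertical (S.G.rev x) := by rwa [S.π.vertical_rev]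
      have hxe' : S.π.onE (S.G.rev x) = S.e (S.edgeIdx (S.π.onE x)) := by
        rw [S.π.rev_onE x hx]
        exact (congrArg S.B.rev hxe).trans (S.B.rev_rev _)
      rcases S.eq_f_or_eq_h hx' hxe' with h | h
      · exact Or.inr (Or.inr (Or.inl (by rw [← h, S.G.rev_rev])))
      · exact Or.inr (Or.inr (Or.inr (by rw [← h, S.G.rev_rev])))

lemma alphaII_eq_signChange : S.alphaII = S.signChange S.edgeParity := by
  funext x
  rw [Section7.alphaII, S.alphaII_flip_iff]
  by_cases hx : S.π.Vertical x
  · rw [if_neg (fun h => h.1 hx), S.signChange_of_vertical _ hx]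
  · rw [signChange, GraphFib.pullSign_of_not_vertical _ hx, edgeParity, parity_smul]
    simp only [hx, not_false_eq_true, true_and]

lemma sB'_e {sB' : S.B.E → Zm 2}
    (hB'e : ∀ i : ZMod S.n, sB' (S.e i) = if Odd i.val then -S.aB (S.e i) else S.aB (S.e i))
    (i : ZMod S.n) : sB' (S.e i) = S.parity i • S.aB (S.e i) := by
  rw [hB'e, parity_smul]

lemma sB'_eq {sB' : S.B.E → Zm 2}
    (hB'e : ∀ i : ZMod S.n, sB' (S.e i) = if Odd i.val then -S.aB (S.e i) else S.aB (S.e i))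
    (hB'rev : ∀ b, sB' (S.B.rev b) = -sB' b) :
    sB' = fun b => S.edgeParity b • S.aB b := by
  funext b
  obtain ⟨i, rfl | rfl⟩ := S.e_cover b
  · rw [S.sB'_e hB'e, edgeParity, edgeIdx_e]
  · rw [hB'rev, S.sB'_e hB'e, edgeParity_rev, edgeParity, edgeIdx_e, S.aB_rev, smul_neg]

noncomputable def kPred (i : ZMod S.n) : ℤ := if i = 0 then -S.k (i - 1) else S.k (i - 1)

lemma kPred_ne_zero (i : ZMod S.n) : S.kPred i ≠ 0 := by
  unfold kPred
  split_ifs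
  exacts [neg_ne_zero.mpr (S.k_ne _), S.k_ne _]

lemma aG_g (i : ZMod S.n) :
    S.aG (S.g i) = S.k i • S.aB (S.e (i - 1)) - S.kPred i • S.aB (S.e i) :=
  S.fiberweight i

lemma alphaII_g (hev : Even S.n) {sB' : S.B.E → Zm 2}
    (hB'e : ∀ i : ZMod S.n, sB' (S.e i) = if Odd i.val then -S.aB (S.e i) else S.aB (S.e i))
    (i : ZMod S.n) :
    S.alphaII (S.g i) =
      (if Even i.val then - S.k i else S.k i) • sB' (S.e (i - 1)) -
      (if i = 0 then - (if Even (i - 1 : ZMod S.n).val then - S.k (i - 1) else S.k (i - 1))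
        else (if Even (i - 1 : ZMod S.n).val then - S.k (i - 1) else S.k (i - 1))) •
        sB' (S.e i) := by
  have hite : ∀ (j : ZMod S.n) (x : ℤ),
      (if Even j.val then -x else x) = (S.parity (j - 1) : ℤ) * x := by
    intro j x
    rw [S.parity_sub_one hev, parity]
    rcases Nat.even_or_odd j.val with h | h
    · rw [if_pos h, h.neg_one_pow]; simp
    · rw [if_neg (Nat.not_even_iff_odd.mpr h), h.neg_one_pow]; simp
  have hpred : (if i = 0 then -((S.parity (i - 1 - 1) : ℤ) * S.k (i - 1))
      else (S.parity (i - 1 - 1) : ℤ) * S.k (i - 1)) = S.parity i * S.kPred i := by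
    rw [sub_sub, one_add_one_eq_two, S.parity_sub_two hev, kPred]
    split_ifs <;> ring
  have hsq : ∀ (j : ZMod S.n) (x : ℤ), (S.parity j : ℤ) * x * S.parity j = x := fun j x => by
    rw [mul_right_comm, Int.units_coe_mul_self, one_mul]
  rw [S.alphaII_eq_signChange, S.signChange_of_vertical _ (S.g_vert i), aG_g, hite, hite, hpred,
    S.sB'_e hB'e, S.sB'_e hB'e, Units.smul_def, Units.smul_def, smul_smul, smul_smul, hsq, hsq]

/-- Since `s * s = t * t = 1`, the label `c • aG (g i)` of `z` equals
`-(c s kPred i) • α x - (c t k i) • α y`. -/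
lemma interiorVtx_iff_of_labels {α : S.G.E → Zm 2} {p : S.G.V} {x y z : S.G.E} (i : ZMod S.n)
    (hp : Finset.univ.filter (fun e : S.G.E => S.G.src e = p) = {x, y, z})
    (hxy : x ≠ y) (hxz : x ≠ z) (hyz : y ≠ z) (s t c : ℤˣ)
    (hx : α x = s • S.aB (S.e i)) (hy : α y = t • -S.aB (S.e (i - 1)))
    (hz : α z = c • S.aG (S.g i)) :
    InteriorVtx S.G α p ↔ 0 < (c * s : ℤ) * S.kPred i ∧ 0 < (c * t : ℤ) * S.k i := by
  have hcross : cross (toC (α x)) (toC (α y)) ≠ 0 := by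
    rw [hx, hy, toC_units_smul, toC_units_smul, cross_smul_smul, cross_toC]
    refine mul_ne_zero (mul_ne_zero (by simp) (by simp)) (Int.cast_ne_zero.mpr ?_)
    simp only [Pi.neg_apply]
    rcases S.delzant i with h | h <;> intro h' <;> linarith
  rw [interiorVtx_iff_of_three_edges hp hxy hxz hyz hcross
    (u := -(((c * s : ℤ) * S.kPred i : ℤ) : ℝ)) (v := -(((c * t : ℤ) * S.k i : ℤ) : ℝ)), neg_lt_zero, neg_lt_zero, Int.cast_pos, Int.cast_pos]
  rw [hx, hy, hz, aG_g, toC_units_smul, toC_units_smul, toC_units_smul, toC_neg, toC_sub,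
    toC_zsmul, toC_zsmul]
  rcases Int.units_eq_one_or s with rfl | rfl <;> rcases Int.units_eq_one_or t with rfl | rfl <;>
    rcases Int.units_eq_one_or c with rfl | rfl <;> push_cast <;> module

variable {S} in
lemma interiorVtx_signChange_iff {σ : S.B.E → ℤˣ} (hσ : ∀ b, σ (S.B.rev b) = σ b) {p : S.G.V}
    {i : ZMod S.n} (hp : S.π.onV p = S.v i) :
    InteriorVtx S.G (S.signChange σ) p ↔
      (p = S.G.src (S.f i) ∧
        0 < (σ (S.e i) : ℤ) * S.kPred i ∧ 0 < (σ (S.e (i - 1)) : ℤ) * S.k i) ∨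
      (p = S.G.src (S.h i) ∧
        (σ (S.e i) : ℤ) * S.kPred i < 0 ∧ (σ (S.e (i - 1)) : ℤ) * S.k i < 0) := by
  have hprev : ∀ y, ¬ S.π.Vertical y → S.π.onE y = S.B.rev (S.e (i - 1)) →
      S.signChange σ y = σ (S.e (i - 1)) • -S.aB (S.e (i - 1)) := fun y hy hyE => by
    rw [S.signChange_of_not_vertical σ hy, hyE, hσ, S.aB_rev]
  have hf := S.interiorVtx_iff_of_labels (α := S.signChange σ) i (S.edgesAt_src_f i)
    (S.f_ne_prevF i) (S.f_ne_g i) (S.prevF_ne_g i) (σ (S.e i)) (σ (S.e (i - 1))) 1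
    (by rw [S.signChange_of_not_vertical σ (S.f_horiz i), S.f_over])
    (hprev _ (S.prevF_not_vertical i) (S.onE_prevF i))
    (by rw [S.signChange_of_vertical σ (S.g_vert i), one_smul])
  have hh := S.interiorVtx_iff_of_labels (α := S.signChange σ) i (S.edgesAt_src_h i)
    (S.h_ne_prevH i) (S.h_ne_rev_g i) (S.prevH_ne_rev_g i) (σ (S.e i)) (σ (S.e (i - 1))) (-1)
    (by rw [S.signChange_of_not_vertical σ (S.h_horiz i), S.h_over])
    (hprev _ (S.prevH_not_vertical i) (S.onE_prevH i))
    (by rw [S.signChange_of_vertical σ ((S.π.vertical_rev _).mpr (S.g_vert i)), S.aG_rev,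
      Units.neg_smul, one_smul])
  rcases S.eq_src_of_onV hp with rfl | rfl
  · simp [hf, S.src_f_ne_src_h i]
  · simp [hh, (S.src_f_ne_src_h i).symm]

lemma card_interiorVtx_signChange {σ : S.B.E → ℤˣ} (hσ : ∀ b, σ (S.B.rev b) = σ b) :
    Nat.card {p // InteriorVtx S.G (S.signChange σ) p} =
      Nat.card {i : ZMod S.n //
        0 < (σ (S.e i) : ℤ) * S.kPred i * ((σ (S.e (i - 1)) : ℤ) * S.k i)} := by
  let idx : S.G.V → ZMod S.n := fun p => (Equiv.ofBijective S.v S.v_bij).symm (S.π.onV p)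
  have hidx : ∀ p, S.π.onV p = S.v (idx p) := fun p =>
    ((Equiv.ofBijective S.v S.v_bij).apply_symm_apply _).symm
  refine Nat.card_congr (Equiv.ofBijective (fun p => ⟨idx p.1, ?_⟩) ⟨?_, ?_⟩)
  · rcases (interiorVtx_signChange_iff hσ (hidx p.1)).mp p.2 with ⟨-, ha, hb⟩ | ⟨-, ha, hb⟩
    exacts [mul_pos ha hb, mul_pos_of_neg_of_neg ha hb]
  · rintro ⟨p, hp⟩ ⟨q, hq⟩ hpq
    have hq' : S.π.onV q = S.v (idx p) := by
      rw [hidx q]; exact congrArg (S.v ∘ Subtype.val) hpq.symm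
    rw [Subtype.mk.injEq]
    rcases (interiorVtx_signChange_iff hσ (hidx p)).mp hp with ⟨hp1, ha, -⟩ | ⟨hp1, ha, -⟩ <;>
      rcases (interiorVtx_signChange_iff hσ hq').mp hq with ⟨hq1, ha', -⟩ | ⟨hq1, ha', -⟩ <;>
      first | exact hp1.trans hq1.symm | linarith
  · rintro ⟨i, hi⟩
    rcases pos_and_pos_or_neg_and_neg_of_mul_pos hi with ⟨ha, hb⟩ | ⟨ha, hb⟩
    · refine ⟨⟨S.G.src (S.f i), (interiorVtx_signChange_iff hσ (S.onV_src_f i)).mpr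
        (Or.inl ⟨rfl, ha, hb⟩)⟩, Subtype.ext ?_⟩
      exact S.v_bij.1 ((hidx _).symm.trans (S.onV_src_f i))
    · refine ⟨⟨S.G.src (S.h i), (interiorVtx_signChange_iff hσ (S.onV_src_h i)).mpr
        (Or.inr ⟨rfl, ha, hb⟩)⟩, Subtype.ext ?_⟩
      exact S.v_bij.1 ((hidx _).symm.trans (S.onV_src_h i))

lemma card_interiorVtx_alphaII (hev : Even S.n) :
    Nat.card {p // InteriorVtx S.G S.alphaII p} = 1 := by
  have hΓ := S.interior_count
  rw [← S.signChange_one, S.card_interiorVtx_signChange (fun _ => rfl)] at hΓ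
  rw [S.alphaII_eq_signChange, S.card_interiorVtx_signChange S.edgeParity_rev]
  have hsum := Nat.card_pos_add_card_neg (fun i => S.kPred i * S.k i)
    (fun i => mul_ne_zero (S.kPred_ne_zero i) (S.k_ne i))
  have hflip : ∀ i : ZMod S.n, (S.edgeParity (S.e i) : ℤ) * S.kPred i *
      ((S.edgeParity (S.e (i - 1)) : ℤ) * S.k i) = -(S.kPred i * S.k i) := fun i => by
    rw [edgeParity, edgeParity, edgeIdx_e, edgeIdx_e, S.parity_sub_one hev, Units.val_neg]
    linear_combination -(S.kPred i * S.k i) * Int.units_coe_mul_self (S.parity i)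
  simp only [Pi.one_apply, Units.val_one, one_mul] at hΓ
  simp only [hflip, Left.neg_pos_iff]
  rw [Nat.card_zmod, hΓ] at hsum
  have := S.hn
  omega

end Section7

/-- in the Section 7 setting with `n` even, flipping the signs of the
base weights of every second edge gives a signed structure `B'`, and the type II
structure `Γ'` fibers over `B'` as a signed GKM fibration, corresponding to
`(-k_1, k_2, …, -k_{n-1}, k_n)` under the classification; in particular `Γ'` has
exactly one interior vertex. -/
theorem statement11 (S : Section7) (heven : Even S.n)
    (sB' : S.B.E → Zm 2)
    (hB'e : ∀ i : ZMod S.n, sB' (S.e i) =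
      (if Odd i.val then - S.aB (S.e i) else S.aB (S.e i)))
    (hB'rev : ∀ ed, sB' (S.B.rev ed) = - sB' ed) :
    IsSignedGKM S.B 2 sB' ∧
    IsSignedGKM S.G 3 S.alphaII ∧
    IsSignedGKMFib S.alphaII sB' S.π ∧
    (∀ i : ZMod S.n, S.alphaII (S.g i) =
      (if Even i.val then - S.k i else S.k i) • sB' (S.e (i - 1)) -
      (if i = 0 then - (if Even (i - 1 : ZMod S.n).val then - S.k (i - 1) else S.k (i - 1))
        else (if Even (i - 1 : ZMod S.n).val then - S.k (i - 1) else S.k (i - 1))) • sB' (S.e i)) ∧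
    Nat.card {p : S.G.V // InteriorVtx S.G S.alphaII p} = 1 := by
  obtain ⟨hπ, C, CB, hC, hCB, hfc⟩ := S.hfib
  have hfib' : IsSignedGKMFib S.alphaII sB' S.π := by
    rw [S.alphaII_eq_signChange, S.sB'_eq hB'e hB'rev]
    exact GraphFib.isSignedGKMFib_units_smul hπ hC hCB hfc S.edgeParity S.edgeParity_rev
      (S.edgeParity_transport heven CB)
  obtain ⟨C', CB', hC', hCB', -⟩ := hfib'.2
  exact ⟨⟨S.hB.1, S.hB.2.1, CB', hCB'⟩, ⟨S.hG.1, S.hG.2.1, C', hC'⟩, hfib',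
    S.alphaII_g heven hB'e, S.card_interiorVtx_alphaII heven⟩

end GKMPaper
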